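/- Let M_1 and M_2 be matroids on a common finite ground set E. Suppose M_1 is connected and M_2 has exactly two connected components: that is, E is partitioned into nonempty disjoint sets P and Q such that the restrictions M_2|P and M_2|Q are connected and r_{M_2}(X) = r_{M_2}(X∩P) + r_{M_2}(X∩Q) for all X ⊆ E. Then the mixing graph G_{M_1,M_2} has at most two connected components. -/

import Mathlib

variable {α : Type*}

/-- `ρ` is an (integer) polymatroid on ground set `E`. -/
def IsPolymatroidOn [DecidableEq α] (E : Finset α) (ρ : Finset α → ℤ) : Prop :=
  ρ ∅ = 0 ∧
  (∀ A B : Finset α, A ⊆ B → B ⊆ E → ρ A ≤ ρ B) ∧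
  (∀ A B : Finset α, A ⊆ E → B ⊆ E → ρ (A ∪ B) + ρ (A ∩ B) ≤ ρ A + ρ B)

/-- `r` is the rank function of a matroid on `E` (matroids are exactly the
`1`-polymatroids). -/
def IsMatroidRankOn [DecidableEq α] (E : Finset α) (r : Finset α → ℤ) : Prop :=
  IsPolymatroidOn E r ∧ ∀ e ∈ E, r {e} ≤ 1

/-- The matroid (with rank function `r`) on ground set `E` is connected: the ground
set is nonempty and the matroid is not a direct sum of two matroids on nonempty
ground sets, i.e. the only separators are `∅` and `E`. -/
def MatroidConnectedOn [DecidableEq α] (E : Finset α) (r : Finset α → ℤ) : Prop :=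
  E.Nonempty ∧
  ∀ P ⊆ E, (∀ X ⊆ E, r X = r (X ∩ P) + r (X \ P)) → P = ∅ ∨ P = E

/-- The mixing graph of two matroids (given by their rank functions `r1`, `r2`) on the
ground set `E`. -/
def mixingGraph [DecidableEq α] (E : Finset α) (r1 r2 : Finset α → ℤ) :
    SimpleGraph {A : Finset α // A ⊆ E ∧ r1 A ≠ r2 A} where
  Adj A B := A ≠ B ∧
    ((A.1 ⊂ B.1 ∨ B.1 ⊂ A.1) ∨
      (r1 (A.1 ∩ B.1) = r2 (A.1 ∩ B.1) ∧ r1 (A.1 ∪ B.1) = r2 (A.1 ∪ B.1) ∧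
        ((A.1 \ B.1) ∪ (B.1 \ A.1)).card = 2))
  symm := by
    constructor
    rintro A B ⟨hne, h⟩
    refine ⟨hne.symm, ?_⟩
    rcases h with h | ⟨h1, h2, h3⟩
    · exact Or.inl h.symm
    · refine Or.inr ⟨?_, ?_, ?_⟩
      · rwa [Finset.inter_comm]
      · rwa [Finset.union_comm]
      · rwa [Finset.union_comm]
  loopless := ⟨fun A h => h.1 rfl⟩


/-!
Write `f = r₁ - r₂`, so that the vertices are the sets with `f ≠ 0`. If `f E ≠ 0`, then `E` is a
vertex containing every other one. Otherwise every component contains `P` or `Q`. Connectivity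
of `M₁` gives `r₁ P + r₁ Q > r₁ E = r₂ P + r₂ Q`, so `f P > 0`, say.

First, every component contains a positive vertex: a negative vertex `X` incomparable with `P`
has a neighbour `X + g` or `X - e` (with `g ∈ P \ X`, `e ∈ X \ P`) closer to `P`, or else both
are balanced, and then `X - e + g` is a positive neighbour of `X`.

Next, a maximal positive superset `B` of a positive vertex spans `M₁` and is a hyperplane of
`M₂ = M₂|P ⊕ M₂|Q`, so it contains `P`, say. Then either `P` is a vertex below `B`, or `B ∩ Q`
is a vertex below both `B` and `Q`, since otherwise `r₁ B ≤ r₁ P + r₁ (B ∩ Q) = r₂ B < r₁ B`.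
-/

open Finset

section Rank

variable [DecidableEq α] {E A B : Finset α} {r : Finset α → ℤ} {g : α}

namespace IsMatroidRankOn

lemma empty (hr : IsMatroidRankOn E r) : r ∅ = 0 := hr.1.1

lemma mono (hr : IsMatroidRankOn E r) (hAB : A ⊆ B) (hB : B ⊆ E) : r A ≤ r B :=
  hr.1.2.1 A B hAB hB

lemma submod (hr : IsMatroidRankOn E r) (hA : A ⊆ E) (hB : B ⊆ E) :
    r (A ∪ B) + r (A ∩ B) ≤ r A + r B :=
  hr.1.2.2 A B hA hB

lemma nonneg (hr : IsMatroidRankOn E r) (hA : A ⊆ E) : 0 ≤ r A :=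
  hr.empty ▸ hr.mono (empty_subset A) hA

lemma union_le (hr : IsMatroidRankOn E r) (hA : A ⊆ E) (hB : B ⊆ E) :
    r (A ∪ B) ≤ r A + r B := by
  have := hr.submod hA hB
  have := hr.nonneg (inter_subset_left.trans hA : A ∩ B ⊆ E)
  omega

lemma le_insert (hr : IsMatroidRankOn E r) (hA : A ⊆ E) (hg : g ∈ E) : r A ≤ r (insert g A) :=
  hr.mono (subset_insert g A) (insert_subset hg hA)

lemma insert_le (hr : IsMatroidRankOn E r) (hA : A ⊆ E) (hg : g ∈ E) :
    r (insert g A) ≤ r A + 1 := by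
  have := hr.union_le (singleton_subset_iff.2 hg) hA
  have := hr.2 g hg
  rw [← insert_eq] at *
  omega

lemma insert_eq_of_subset (hr : IsMatroidRankOn E r) (hAB : A ⊆ B) (hB : B ⊆ E) (hg : g ∈ E)
    (h : r (insert g A) = r A) : r (insert g B) = r B := by
  have := hr.submod (insert_subset hg (hAB.trans hB)) hB
  rw [show insert g A ∪ B = insert g B by grind] at this
  have := hr.mono (subset_inter (subset_insert g A) hAB) (inter_subset_right.trans hB)
  have := hr.le_insert hB hg
  omega

lemma eq_of_forall_insert_eq (hr : IsMatroidRankOn E r) (hA : A ⊆ E)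
    (h : ∀ g ∈ E, g ∉ A → r (insert g A) = r A) : r E = r A := by
  suffices ∀ S ⊆ E \ A, r (A ∪ S) = r A by
    simpa [union_sdiff_of_subset hA] using this (E \ A) subset_rfl
  intro S
  induction S using Finset.induction_on with
  | empty => simp
  | insert g S _ ih =>
    intro hS
    obtain ⟨hgE, hgA⟩ := mem_sdiff.1 (hS (mem_insert_self g S))
    have hAS : A ∪ S ⊆ E := union_subset hA ((subset_insert g S).trans hS |>.trans sdiff_subset)
    rw [union_insert, hr.insert_eq_of_subset subset_union_left hAS hgE (h g hgE hgA),
      ih ((subset_insert g S).trans hS)]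

end IsMatroidRankOn

end Rank

structure IsDirectSum [DecidableEq α] (E P Q : Finset α) (r : Finset α → ℤ) : Prop where
  disjoint : Disjoint P Q
  union_eq : P ∪ Q = E
  rank_eq : ∀ X ⊆ E, r X = r (X ∩ P) + r (X ∩ Q)

namespace IsDirectSum

variable [DecidableEq α] {E P Q X : Finset α} {r : Finset α → ℤ}

lemma symm (hs : IsDirectSum E P Q r) : IsDirectSum E Q P r :=
  ⟨hs.disjoint.symm, union_comm Q P ▸ hs.union_eq,
    fun X hX => (hs.rank_eq X hX).trans (add_comm _ _)⟩

lemma left_subset (hs : IsDirectSum E P Q r) : P ⊆ E := hs.union_eq ▸ subset_union_left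

lemma right_subset (hs : IsDirectSum E P Q r) : Q ⊆ E := hs.union_eq ▸ subset_union_right

lemma rank_eq_add (hs : IsDirectSum E P Q r) : r E = r P + r Q := by
  rw [hs.rank_eq E subset_rfl, inter_eq_right.2 hs.left_subset, inter_eq_right.2 hs.right_subset]

lemma inter_right_eq_sdiff (hs : IsDirectSum E P Q r) (hX : X ⊆ E) : X ∩ Q = X \ P := by
  have := hs.union_eq
  have := disjoint_left.1 hs.disjoint
  grind

end IsDirectSum

section Connected

variable [DecidableEq α] {E P Q : Finset α} {r : Finset α → ℤ}

lemma IsMatroidRankOn.isDirectSum_of_add_eq (hr : IsMatroidRankOn E r) (hdisj : Disjoint P Q)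
    (hPQ : P ∪ Q = E) (h : r P + r Q = r E) : IsDirectSum E P Q r := by
  have hP : P ⊆ E := hPQ ▸ subset_union_left
  have hQ : Q ⊆ E := hPQ ▸ subset_union_right
  refine ⟨hdisj, hPQ, fun X hX => le_antisymm ?_ ?_⟩
  · have := hr.union_le (inter_subset_left.trans hX : X ∩ P ⊆ E)
      (inter_subset_left.trans hX : X ∩ Q ⊆ E)
    rwa [← inter_union_distrib_left, hPQ, inter_eq_left.2 hX] at this
  · have hXP := hr.submod hX hP
    have hXPQ := hr.submod (union_subset hX hP) hQ
    rw [union_assoc, hPQ, union_eq_right.2 hX, union_inter_distrib_right,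
      disjoint_iff_inter_eq_empty.1 hdisj, union_empty] at hXPQ
    omega

lemma MatroidConnectedOn.rank_lt_add (hc : MatroidConnectedOn E r) (hr : IsMatroidRankOn E r)
    (hP : P.Nonempty) (hQ : Q.Nonempty) (hdisj : Disjoint P Q) (hPQ : P ∪ Q = E) :
    r E < r P + r Q := by
  by_contra! hle
  have hge := hr.submod (hPQ ▸ subset_union_left : P ⊆ E) (hPQ ▸ subset_union_right)
  rw [hPQ, disjoint_iff_inter_eq_empty.1 hdisj, hr.empty] at hge
  have hs := hr.isDirectSum_of_add_eq hdisj hPQ (by omega)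
  rcases hc.2 P hs.left_subset fun X hX => hs.inter_right_eq_sdiff hX ▸ hs.rank_eq X hX
    with rfl | rfl
  · exact not_nonempty_empty hP
  · obtain ⟨q, hq⟩ := hQ
    exact disjoint_left.1 hdisj (hPQ ▸ mem_union_right _ hq) hq

end Connected

section TwoMatroids

variable [DecidableEq α] {E P Q B X Y : Finset α} {r r1 r2 : Finset α → ℤ} {e g : α}

lemma IsDirectSum.subset_of_rank_inter_eq (hs : IsDirectSum E P Q r) (hr : IsMatroidRankOn E r)
    (hB : B ⊆ E) (hcl : ∀ g ∈ E, g ∉ B → r B < r (insert g B)) (h : r (B ∩ P) = r P) :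
    P ⊆ B := by
  intro p hp
  by_contra hpB
  have hpE := hs.left_subset hp
  have hsplit := hs.rank_eq (insert p B) (insert_subset hpE hB)
  rw [insert_inter_of_mem hp, insert_inter_of_notMem (disjoint_left.1 hs.disjoint hp)] at hsplit
  have := hr.mono (insert_subset hp (inter_subset_right : B ∩ P ⊆ P)) hs.left_subset
  have := hs.rank_eq B hB
  have := hcl p hpE hpB
  omega

lemma IsDirectSum.subset_or_subset_of_hyperplane (hs : IsDirectSum E P Q r)
    (hr : IsMatroidRankOn E r) (hB : B ⊆ E) (hrB : r B + 1 = r E)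
    (hcl : ∀ g ∈ E, g ∉ B → r B < r (insert g B)) : P ⊆ B ∨ Q ⊆ B := by
  have := hs.rank_eq B hB
  have := hs.rank_eq_add
  have := hr.mono inter_subset_right hs.left_subset (A := B ∩ P)
  have := hr.mono inter_subset_right hs.right_subset (A := B ∩ Q)
  rcases (by omega : r (B ∩ P) = r P ∨ r (B ∩ Q) = r Q) with hP | hQ
  · exact Or.inl (hs.subset_of_rank_inter_eq hr hB hcl hP)
  · exact Or.inr (hs.symm.subset_of_rank_inter_eq hr hB hcl hQ)

lemma exists_spanning_hyperplane_superset (h1 : IsMatroidRankOn E r1)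
    (h2 : IsMatroidRankOn E r2) (hE : r1 E = r2 E) (hY : Y ⊆ E) (hpos : r2 Y < r1 Y) :
    ∃ B, Y ⊆ B ∧ B ⊆ E ∧ r1 B = r1 E ∧ r2 B + 1 = r2 E ∧
      ∀ g ∈ E, g ∉ B → r2 B < r2 (insert g B) := by
  obtain ⟨B, hYB, hmax⟩ := (E.powerset.filter fun B => r2 B < r1 B).exists_le_maximal
    (mem_filter.2 ⟨mem_powerset.2 hY, hpos⟩)
  obtain ⟨hBE, hBpos⟩ := mem_filter.1 hmax.prop
  rw [mem_powerset] at hBE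
  have hstep : ∀ g ∈ E, g ∉ B →
      r1 (insert g B) = r1 B ∧ r2 (insert g B) = r2 B + 1 ∧ r1 B = r2 B + 1 := by
    intro g hg hgB
    have hnot : ¬ r2 (insert g B) < r1 (insert g B) := fun h =>
      hgB (hmax.eq_of_le (mem_filter.2 ⟨mem_powerset.2 (insert_subset hg hBE), h⟩)
        (subset_insert g B) ▸ mem_insert_self g B)
    have := h1.le_insert hBE hg
    have := h1.insert_le hBE hg
    have := h2.le_insert hBE hg
    have := h2.insert_le hBE hg
    omega
  obtain ⟨g, hg, hgB⟩ := not_subset.1 fun hEB : E ⊆ B => by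
    rw [subset_antisymm hBE hEB] at hBpos; omega
  have hspan := h1.eq_of_forall_insert_eq hBE fun g hg hgB => (hstep g hg hgB).1
  have := (hstep g hg hgB).2.2
  exact ⟨B, hYB, hBE, hspan.symm, by omega, fun g hg hgB => by
    have := (hstep g hg hgB).2.1; omega⟩

lemma IsDirectSum.rank_ne_of_spanning_hyperplane (hs : IsDirectSum E P Q r2)
    (h1 : IsMatroidRankOn E r1) (hE : r1 E = r2 E) (hsum : r1 E < r1 P + r1 Q) (hPB : P ⊆ B)
    (hB : B ⊆ E) (hB1 : r1 B = r1 E) (hB2 : r2 B + 1 = r2 E) :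
    r1 P ≠ r2 P ∨ (r1 (B ∩ Q) ≠ r2 (B ∩ Q) ∧ r1 Q ≠ r2 Q) := by
  have hsplit := hs.rank_eq B hB
  rw [inter_eq_right.2 hPB] at hsplit
  have hsub := h1.union_le hs.left_subset (inter_subset_right.trans hs.right_subset : B ∩ Q ⊆ E)
  rw [show P ∪ B ∩ Q = B by have := hs.union_eq; grind] at hsub
  have := hs.rank_eq_add
  omega

lemma IsDirectSum.rank_insert_erase_add (hs : IsDirectSum E P Q r) (hX : X ⊆ E) (hgP : g ∈ P)
    (heP : e ∉ P) :
    r (insert g (X.erase e)) + r X = r (insert g X) + r (X.erase e) := by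
  have hg := hs.left_subset hgP
  have hgQ := disjoint_left.1 hs.disjoint hgP
  have hX' : X.erase e ⊆ E := (erase_subset e X).trans hX
  rw [hs.rank_eq _ (insert_subset hg hX'), hs.rank_eq X hX, hs.rank_eq _ (insert_subset hg hX),
    hs.rank_eq _ hX', insert_inter_of_mem hgP, insert_inter_of_notMem hgQ,
    insert_inter_of_mem hgP, insert_inter_of_notMem hgQ, erase_inter, erase_inter,
    erase_eq_of_notMem (fun h => heP (mem_inter.1 h).2)]
  ring

lemma IsDirectSum.rank_lt_of_exchange (hs : IsDirectSum E P Q r2) (h1 : IsMatroidRankOn E r1)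
    (h2 : IsMatroidRankOn E r2) (hX : X ⊆ E) (hgP : g ∈ P) (heX : e ∈ X) (heP : e ∉ P)
    (hneg : r1 X < r2 X) (hins : r1 (insert g X) = r2 (insert g X))
    (hera : r1 (X.erase e) = r2 (X.erase e)) :
    r2 (insert g (X.erase e)) < r1 (insert g (X.erase e)) := by
  have hg := hs.left_subset hgP
  have he := hX heX
  have hX' : X.erase e ⊆ E := (erase_subset e X).trans hX
  have := h1.le_insert hX hg
  have := h1.insert_le hX hg
  have := h2.le_insert hX hg
  have := h2.insert_le hX hg
  have := h1.le_insert hX' he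
  have := h1.insert_le hX' he
  have := h2.le_insert hX' he
  have := h2.insert_le hX' he
  rw [insert_erase heX] at *
  -- `g` is not spanned by `X`, so not by `X - e` either
  have hcl : r1 (X.erase e) < r1 (insert g (X.erase e)) := by
    refine lt_of_le_of_ne (h1.le_insert hX' hg) fun h => ?_
    have := h1.insert_eq_of_subset (erase_subset e X) hX hg h.symm
    omega
  have := h1.insert_le hX' hg
  have := hs.rank_insert_erase_add hX hgP heP
  omega

end TwoMatroids

lemma SimpleGraph.reachable_or_reachable_or_reachable {V β : Type*} {G : SimpleGraph V}
    {f : V → β} (hf : f.Injective) {a b : β}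
    (h : ∀ v, ∃ t, G.Reachable v t ∧ (f t = a ∨ f t = b)) (x y z : V) :
    G.Reachable x y ∨ G.Reachable x z ∨ G.Reachable y z := by
  have hsame : ∀ u w tu tw, G.Reachable u tu → G.Reachable w tw → f tu = f tw →
      G.Reachable u w := fun u w tu tw hu hw htw => hu.trans (hf htw ▸ hw.symm)
  obtain ⟨tx, hx, hfx⟩ := h x
  obtain ⟨ty, hy, hfy⟩ := h y
  obtain ⟨tz, hz, hfz⟩ := h z
  by_contra! hne
  exact hne.1 (hsame _ _ _ _ hx hy (by
    have := mt (hsame _ _ _ _ hx hz); have := mt (hsame _ _ _ _ hy hz); grind))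

section MixingGraph

variable [DecidableEq α] {E : Finset α} {r1 r2 : Finset α → ℤ}
  {X Y Z : {A : Finset α // A ⊆ E ∧ r1 A ≠ r2 A}} {e g : α}

lemma mixingGraph_adj_of_ssubset (h : X.1 ⊂ Y.1) : (mixingGraph E r1 r2).Adj X Y :=
  ⟨fun hXY => h.ne (congrArg Subtype.val hXY), Or.inl (Or.inl h)⟩

lemma mixingGraph_reachable_of_subset (h : X.1 ⊆ Y.1) : (mixingGraph E r1 r2).Reachable X Y := by
  rcases h.eq_or_ssubset with h | h
  · rw [Subtype.ext h]
  · exact (mixingGraph_adj_of_ssubset h).reachable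

lemma mixingGraph_reachable_of_subset_subset (hY : X.1 ⊆ Y.1) (hZ : X.1 ⊆ Z.1) :
    (mixingGraph E r1 r2).Reachable Y Z :=
  (mixingGraph_reachable_of_subset hY).symm.trans (mixingGraph_reachable_of_subset hZ)

lemma mixingGraph_adj_of_exchange (heX : e ∈ X.1) (hgX : g ∉ X.1)
    (hY : Y.1 = insert g (X.1.erase e)) (hins : r1 (insert g X.1) = r2 (insert g X.1))
    (hera : r1 (X.1.erase e) = r2 (X.1.erase e)) : (mixingGraph E r1 r2).Adj X Y := by
  have heg : e ≠ g := ne_of_mem_of_not_mem heX hgX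
  refine ⟨fun hXY => ?_, Or.inr ⟨?_, ?_, ?_⟩⟩
  · have : e ∈ Y.1 := hXY ▸ heX
    simp [hY, heg] at this
  · rwa [hY, show X.1 ∩ insert g (X.1.erase e) = X.1.erase e by grind]
  · rwa [hY, show X.1 ∪ insert g (X.1.erase e) = insert g X.1 by grind]
  · rw [hY, show X.1 \ insert g (X.1.erase e) ∪ insert g (X.1.erase e) \ X.1 = {e, g} by grind,
      card_pair heg]

end MixingGraph

section Components

variable [DecidableEq α] {E P Q : Finset α} {r1 r2 : Finset α → ℤ}

lemma IsDirectSum.exists_reachable_pos (hs : IsDirectSum E P Q r2) (h1 : IsMatroidRankOn E r1)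
    (h2 : IsMatroidRankOn E r2) (hP : r2 P < r1 P) (X : {A : Finset α // A ⊆ E ∧ r1 A ≠ r2 A}) :
    ∃ Y, (mixingGraph E r1 r2).Reachable X Y ∧ r2 Y.1 < r1 Y.1 := by
  rcases lt_or_gt_of_ne X.2.2 with hneg | hpos
  swap
  · exact ⟨X, .refl X, hpos⟩
  let P' : {A : Finset α // A ⊆ E ∧ r1 A ≠ r2 A} := ⟨P, hs.left_subset, hP.ne'⟩
  by_cases hXP : X.1 ⊆ P
  · exact ⟨P', mixingGraph_reachable_of_subset (Y := P') hXP, hP⟩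
  by_cases hPX : P ⊆ X.1
  · exact ⟨P', (mixingGraph_reachable_of_subset (X := P') hPX).symm, hP⟩
  obtain ⟨g, hgP, hgX⟩ := not_subset.1 hPX
  obtain ⟨e, heX, heP⟩ := not_subset.1 hXP
  by_cases hins : r1 (insert g X.1) = r2 (insert g X.1)
  swap
  · obtain ⟨Y, hY, hYpos⟩ := hs.exists_reachable_pos h1 h2 hP
      ⟨insert g X.1, insert_subset (hs.left_subset hgP) X.2.1, hins⟩
    exact ⟨Y, (mixingGraph_reachable_of_subset (subset_insert g X.1)).trans hY, hYpos⟩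
  by_cases hera : r1 (X.1.erase e) = r2 (X.1.erase e)
  swap
  · obtain ⟨Y, hY, hYpos⟩ := hs.exists_reachable_pos h1 h2 hP
      ⟨X.1.erase e, (erase_subset e X.1).trans X.2.1, hera⟩
    exact ⟨Y, (mixingGraph_reachable_of_subset (erase_subset e X.1)).symm.trans hY, hYpos⟩
  have hY := hs.rank_lt_of_exchange h1 h2 X.2.1 hgP heX heP hneg hins hera
  exact ⟨⟨_, insert_subset (hs.left_subset hgP) ((erase_subset e X.1).trans X.2.1), hY.ne'⟩,
    (mixingGraph_adj_of_exchange heX hgX rfl hins hera).reachable, hY⟩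
termination_by (X.1 \ P).card + (P \ X.1).card
decreasing_by
  · rw [erase_sdiff_comm, card_erase_of_mem (mem_sdiff.2 ⟨heX, heP⟩),
      show P \ X.1.erase e = P \ X.1 by grind]
    have := card_pos.2 ⟨e, mem_sdiff.2 ⟨heX, heP⟩⟩
    omega
  · rw [insert_sdiff_of_mem _ hgP, sdiff_insert, card_erase_of_mem (mem_sdiff.2 ⟨hgP, hgX⟩)]
    have := card_pos.2 ⟨g, mem_sdiff.2 ⟨hgP, hgX⟩⟩
    omega

lemma IsDirectSum.exists_reachable_left_or_right_of_subset (hs : IsDirectSum E P Q r2)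
    (h1 : IsMatroidRankOn E r1) (hE : r1 E = r2 E) (hsum : r1 E < r1 P + r1 Q)
    (B : {A : Finset α // A ⊆ E ∧ r1 A ≠ r2 A}) (hPB : P ⊆ B.1) (hB1 : r1 B.1 = r1 E)
    (hB2 : r2 B.1 + 1 = r2 E) :
    ∃ T, (mixingGraph E r1 r2).Reachable B T ∧ (T.1 = P ∨ T.1 = Q) := by
  rcases hs.rank_ne_of_spanning_hyperplane h1 hE hsum hPB B.2.1 hB1 hB2 with hP | ⟨hK, hQ⟩
  · exact ⟨⟨P, hs.left_subset, hP⟩, (mixingGraph_reachable_of_subset hPB).symm, Or.inl rfl⟩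
  · exact ⟨⟨Q, hs.right_subset, hQ⟩, mixingGraph_reachable_of_subset_subset
      (X := ⟨B.1 ∩ Q, inter_subset_right.trans hs.right_subset, hK⟩)
      inter_subset_left inter_subset_right, Or.inr rfl⟩

lemma IsDirectSum.exists_reachable_left_or_right (hs : IsDirectSum E P Q r2)
    (h1 : IsMatroidRankOn E r1) (h2 : IsMatroidRankOn E r2) (hE : r1 E = r2 E)
    (hsum : r1 E < r1 P + r1 Q) (hP : r2 P < r1 P) (X : {A : Finset α // A ⊆ E ∧ r1 A ≠ r2 A}) :
    ∃ T, (mixingGraph E r1 r2).Reachable X T ∧ (T.1 = P ∨ T.1 = Q) := by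
  obtain ⟨Y, hXY, hY⟩ := hs.exists_reachable_pos h1 h2 hP X
  obtain ⟨B, hYB, hBE, hB1, hB2, hcl⟩ := exists_spanning_hyperplane_superset h1 h2 hE Y.2.1 hY
  let B' : {A : Finset α // A ⊆ E ∧ r1 A ≠ r2 A} := ⟨B, hBE, by omega⟩
  have hXB : (mixingGraph E r1 r2).Reachable X B' :=
    hXY.trans (mixingGraph_reachable_of_subset (Y := B') hYB)
  rcases hs.subset_or_subset_of_hyperplane h2 hBE hB2 hcl with hPB | hQB
  · obtain ⟨T, hT, hTPQ⟩ :=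
      hs.exists_reachable_left_or_right_of_subset h1 hE hsum B' hPB hB1 hB2
    exact ⟨T, hXB.trans hT, hTPQ⟩
  · obtain ⟨T, hT, hTPQ⟩ :=
      hs.symm.exists_reachable_left_or_right_of_subset h1 hE (by omega) B' hQB hB1 hB2
    exact ⟨T, hXB.trans hT, hTPQ.symm⟩

end Components

theorem stmt10_general [DecidableEq α] (E : Finset α) (r1 r2 : Finset α → ℤ)
    (h1 : IsMatroidRankOn E r1) (h2 : IsMatroidRankOn E r2)
    (hconn1 : MatroidConnectedOn E r1)
    (P Q : Finset α) (hP : P.Nonempty) (hQ : Q.Nonempty)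
    (hdisj : Disjoint P Q) (hPQ : P ∪ Q = E)
    (hadd : ∀ X ⊆ E, r2 X = r2 (X ∩ P) + r2 (X ∩ Q)) :
    ∀ A B C : {A : Finset α // A ⊆ E ∧ r1 A ≠ r2 A},
      (mixingGraph E r1 r2).Reachable A B ∨
      (mixingGraph E r1 r2).Reachable A C ∨
      (mixingGraph E r1 r2).Reachable B C := by
  by_cases hE : r1 E = r2 E
  · have hs : IsDirectSum E P Q r2 := ⟨hdisj, hPQ, hadd⟩
    have hsum := hconn1.rank_lt_add h1 hP hQ hdisj hPQ
    have := hs.rank_eq_add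
    refine SimpleGraph.reachable_or_reachable_or_reachable Subtype.val_injective
      (a := P) (b := Q) ?_
    rcases (by omega : r2 P < r1 P ∨ r2 Q < r1 Q) with hfP | hfQ
    · exact hs.exists_reachable_left_or_right h1 h2 hE hsum hfP
    · intro X
      obtain ⟨T, hT, hTQP⟩ := hs.symm.exists_reachable_left_or_right h1 h2 hE (by omega) hfQ X
      exact ⟨T, hT, hTQP.symm⟩
  · let top : {A : Finset α // A ⊆ E ∧ r1 A ≠ r2 A} := ⟨E, subset_rfl, hE⟩
    intro A B _
    exact Or.inl ((mixingGraph_reachable_of_subset (Y := top) A.2.1).trans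
      (mixingGraph_reachable_of_subset B.2.1).symm)

/-- If `M₁` is connected and `M₂` has exactly two connected components, then the
mixing graph has at most two connected components (among any three vertices, two are
in the same component). -/
theorem stmt10 [DecidableEq α] (E : Finset α) (r1 r2 : Finset α → ℤ)
    (h1 : IsMatroidRankOn E r1) (h2 : IsMatroidRankOn E r2)
    (hconn1 : MatroidConnectedOn E r1)
    (P Q : Finset α) (hP : P.Nonempty) (hQ : Q.Nonempty)
    (hdisj : Disjoint P Q) (hPQ : P ∪ Q = E)
    (hconnP : MatroidConnectedOn P r2) (hconnQ : MatroidConnectedOn Q r2)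
    (hadd : ∀ X ⊆ E, r2 X = r2 (X ∩ P) + r2 (X ∩ Q)) :
    ∀ A B C : {A : Finset α // A ⊆ E ∧ r1 A ≠ r2 A},
      (mixingGraph E r1 r2).Reachable A B ∨
      (mixingGraph E r1 r2).Reachable A C ∨
      (mixingGraph E r1 r2).Reachable B C :=
  stmt10_general E r1 r2 h1 h2 hconn1 P Q hP hQ hdisj hPQ hadd
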